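/- arXiv:2101.02687 — 2 statements merged into one kernel-verified Lean document; each statement's English description precedes it below -/
import Mathlib

section
/- The hyperplane Σ = {p ∈ 𝕄 : t(p) = 0} is a Cauchy surface of Minkowski space-time: every future-directed causal curve c : ℝ → 𝕄 parametrized by Euclidean arc length (hence inextendible) meets Σ exactly once, i.e. there exists a unique s ∈ ℝ with t(c(s)) = 0. -/
noncomputable section

open Set Filter

/-- Minkowski space-time `𝕄 = ℝ × EuclideanSpace ℝ (Fin 3)`, equipped with the Euclidean
norm `‖(t,x)‖ = √(t² + ‖x‖²)` (i.e. the `L²` product norm). -/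
abbrev Mink : Type := WithLp 2 (ℝ × EuclideanSpace ℝ (Fin 3))

/-- The future causal cone `C = {(t,x) : ‖x‖ ≤ t}`. -/
def causalCone : Set Mink := {p | ‖p.ofLp.2‖ ≤ p.ofLp.1}

/-- The future chronological cone `C° = {(t,x) : ‖x‖ < t}` (the interior of `C`). -/
def chronCone : Set Mink := {p | ‖p.ofLp.2‖ < p.ofLp.1}

/-- `causalLE x y` (written `x ≤ y`): `x` causally precedes `y`, i.e. `y - x ∈ C`. -/
def causalLE (x y : Mink) : Prop := y - x ∈ causalCone

/-- `chronLT x y` (written `x ≪ y`): `x` chronologically precedes `y`, i.e. `y - x ∈ C°`. -/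
def chronLT (x y : Mink) : Prop := y - x ∈ chronCone

/-- The chronological past `I⁻(x) = {z : z ≪ x}`. -/
def Iminus (x : Mink) : Set Mink := {z | chronLT z x}

/-- The causal past `J⁻(x) = {z : z ≤ x}`. -/
def Jminus (x : Mink) : Set Mink := {z | causalLE z x}

/-- The causal future `J⁺(x) = {z : x ≤ z}`. -/
def Jplus (x : Mink) : Set Mink := {z | causalLE x z}

/-- A future-directed causal curve on an interval `I ⊆ ℝ`: a continuous map `c : I → 𝕄`
such that `c t - c s ∈ C` and `c s ≠ c t` whenever `s < t` in `I`. -/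
def IsFDCausalOn (c : ℝ → Mink) (I : Set ℝ) : Prop :=
  ContinuousOn c I ∧ ∀ s ∈ I, ∀ t ∈ I, s < t → c t - c s ∈ causalCone ∧ c s ≠ c t

/-!
Along a causal curve the Euclidean length of a step is at most `√2` times its time increment,
so for a curve parametrized by arc length the time coordinate grows at least like `s / √2`.
Being continuous, it is therefore a bijection `ℝ → ℝ`, and in particular takes the value `0`
exactly once.
-/

lemma fst_nonneg_of_mem_causalCone {p : Mink} (hp : p ∈ causalCone) : 0 ≤ p.ofLp.1 :=
  (norm_nonneg _).trans hp

lemma norm_le_sqrt_two_mul_fst_of_mem_causalCone {p : Mink} (hp : p ∈ causalCone) :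
    ‖p‖ ≤ √2 * p.ofLp.1 := by
  have hsq : ‖p.ofLp.2‖ ^ 2 ≤ p.ofLp.1 ^ 2 := pow_le_pow_left₀ (norm_nonneg _) hp 2
  rw [WithLp.prod_norm_eq_of_L2, Real.norm_eq_abs, sq_abs,
    ← Real.sqrt_sq (fst_nonneg_of_mem_causalCone hp), ← Real.sqrt_mul zero_le_two]
  simp only [WithLp.ofLp_fst, WithLp.ofLp_snd] at hsq ⊢
  exact Real.sqrt_le_sqrt (by linarith)

lemma eVariationOn_le_of_edist_le {α E F : Type*} [LinearOrder α] [PseudoEMetricSpace E]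
    [PseudoEMetricSpace F] {f : α → E} {g : α → F} {s : Set α}
    (h : ∀ x ∈ s, ∀ y ∈ s, x ≤ y → edist (f y) (f x) ≤ edist (g y) (g x)) :
    eVariationOn f s ≤ eVariationOn g s :=
  iSup_mono fun ⟨_, _, hu, hus⟩ ↦
    Finset.sum_le_sum fun i _ ↦ h _ (hus i) _ (hus (i + 1)) (hu i.le_succ)

lemma Real.bijective_of_continuous_of_sub_le_mul {f : ℝ → ℝ} {k : ℝ} (hf : Continuous f)
    (hk : 0 < k) (hgrow : ∀ a b, a ≤ b → b - a ≤ k * (f b - f a)) :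
    Function.Bijective f := by
  have hlower : ∀ t, 0 ≤ t → f 0 + t / k ≤ f t := fun t ht ↦ by
    have := hgrow 0 t ht
    rw [← le_sub_iff_add_le', div_le_iff₀' hk]
    linarith
  have hupper : ∀ t, t ≤ 0 → f t ≤ f 0 + t / k := fun t ht ↦ by
    have := hgrow t 0 ht
    rw [← sub_le_iff_le_add', le_div_iff₀' hk]
    linarith
  have hmono : StrictMono f := fun a b h ↦
    sub_pos.1 <| pos_of_mul_pos_right ((sub_pos.2 h).trans_le (hgrow a b h.le)) hk.le
  refine ⟨hmono.injective, hf.surjective ?_ ?_⟩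
  · exact tendsto_atTop_mono' _ (eventually_ge_atTop 0 |>.mono hlower)
      (tendsto_atTop_add_const_left _ _ (tendsto_id.atTop_div_const hk))
  · exact tendsto_atBot_mono' _ (eventually_le_atBot 0 |>.mono hupper)
      (tendsto_atBot_add_const_left _ _ (tendsto_id.atBot_div_const hk))

namespace IsFDCausalOn

variable {c : ℝ → Mink} {I : Set ℝ}

lemma monotoneOn_fst (hc : IsFDCausalOn c I) : MonotoneOn (fun s ↦ (c s).ofLp.1) I := by
  intro s hs t ht hst
  rcases hst.eq_or_lt with rfl | hlt
  · rfl
  · have := fst_nonneg_of_mem_causalCone (hc.2 s hs t ht hlt).1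
    simp only [WithLp.ofLp_sub, Prod.fst_sub, sub_nonneg] at this
    exact this

lemma edist_le_sqrt_two_mul_fst (hc : IsFDCausalOn c I) {s t : ℝ} (hs : s ∈ I) (ht : t ∈ I)
    (hst : s ≤ t) : edist (c t) (c s) ≤ edist (√2 * (c t).ofLp.1) (√2 * (c s).ofLp.1) := by
  rcases hst.eq_or_lt with rfl | hlt
  · simp
  rw [edist_dist, edist_dist, Real.dist_eq, ← mul_sub, abs_of_nonneg
    (mul_nonneg (Real.sqrt_nonneg 2) (sub_nonneg.2 (hc.monotoneOn_fst hs ht hst)))]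
  exact ENNReal.ofReal_le_ofReal
    (norm_le_sqrt_two_mul_fst_of_mem_causalCone (hc.2 s hs t ht hlt).1)

lemma eVariationOn_Icc_le (hc : IsFDCausalOn c I) {a b : ℝ} (hab : a ≤ b) (hI : Icc a b ⊆ I) :
    eVariationOn c (Icc a b) ≤ ENNReal.ofReal (√2 * ((c b).ofLp.1 - (c a).ofLp.1)) := by
  have hmono : MonotoneOn (fun s ↦ √2 * (c s).ofLp.1) (Icc a b) := fun s hs t ht hst ↦
    mul_le_mul_of_nonneg_left (hc.monotoneOn_fst (hI hs) (hI ht) hst) (Real.sqrt_nonneg 2)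
  calc eVariationOn c (Icc a b)
      ≤ eVariationOn (fun s ↦ √2 * (c s).ofLp.1) (Icc a b) :=
        eVariationOn_le_of_edist_le fun s hs t ht hst ↦
          hc.edist_le_sqrt_two_mul_fst (hI hs) (hI ht) hst
    _ = ENNReal.ofReal (√2 * ((c b).ofLp.1 - (c a).ofLp.1)) := by
        rw [← inter_self (Icc a b),
          hmono.eVariationOn_eq (left_mem_Icc.2 hab) (right_mem_Icc.2 hab), mul_sub]

end IsFDCausalOn

/-- The hyperplane `Σ = {t = 0}` is a Cauchy surface of Minkowski space-time: every
future-directed causal curve `c : ℝ → 𝕄` parametrized by Euclidean arc length (hence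
inextendible) meets `Σ` exactly once. -/
theorem minkowski_t_zero_hyperplane_is_Cauchy (c : ℝ → Mink)
    (hc : IsFDCausalOn c Set.univ)
    (harc : ∀ a b : ℝ, a ≤ b → eVariationOn c (Set.Icc a b) = ENNReal.ofReal (b - a)) :
    ∃! s : ℝ, (c s).ofLp.1 = 0 := by
  have hcont : Continuous fun s ↦ (c s).ofLp.1 :=
    continuous_fst.comp ((WithLp.prod_continuous_ofLp 2 _ _).comp (continuousOn_univ.1 hc.1))
  have hgrow : ∀ a b, a ≤ b → b - a ≤ √2 * ((c b).ofLp.1 - (c a).ofLp.1) := by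
    intro a b hab
    have hvar := hc.eVariationOn_Icc_le hab (subset_univ _)
    rw [harc a b hab] at hvar
    exact (ENNReal.ofReal_le_ofReal_iff (mul_nonneg (Real.sqrt_nonneg 2)
      (sub_nonneg.2 (hc.monotoneOn_fst trivial trivial hab)))).1 hvar
  exact (Real.bijective_of_continuous_of_sub_le_mul hcont (by positivity) hgrow).existsUnique 0
end
end

section
/- Every future-endless causal curve in Minkowski space-time defines an ideal point, i.e. a terminal indecomposable past set: if γ : [0,∞) → 𝕄 is a future-directed causal curve parametrized by Euclidean arc length, then I⁻(γ) is a nonempty open past set, and I⁻(γ) ≠ I⁻(x) for every point x ∈ 𝕄. -/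
noncomputable section

open Set Filter

/-- A past set: `U ⊆ 𝕄` such that `z ∈ U` and `w ≪ z` imply `w ∈ U`. -/
def IsPastSet (U : Set Mink) : Prop := ∀ z ∈ U, ∀ w : Mink, chronLT w z → w ∈ U

/-!
Along a future-directed causal curve the Euclidean length is controlled by the elapsed time,
`‖q - p‖ ≤ √2 (t(q) - t(p))` for `p ≤ q`, so an arc-length parametrized curve on `[0, ∞)`
satisfies `s ≤ √2 (t(γ s) - t(γ 0))` and reaches arbitrarily late times. Every point of
`I⁻(x)` is earlier than `x`, whereas `I⁻(γ)` contains the points `γ s - (1, 0)` of arbitrarily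
late time; hence `I⁻(γ) ≠ I⁻(x)`. Openness and the past-set property hold for any union of
chronological pasts.
-/

open scoped ENNReal

theorem eVariationOn_le_mul_of_edist_le {α E F : Type*} [LinearOrder α] [PseudoEMetricSpace E]
    [PseudoEMetricSpace F] {f : α → E} {g : α → F} {s : Set α} {C : ℝ≥0∞}
    (h : ∀ x ∈ s, ∀ y ∈ s, edist (f x) (f y) ≤ C * edist (g x) (g y)) :
    eVariationOn f s ≤ C * eVariationOn g s := by
  refine iSup_le fun ⟨n, u, hu, us⟩ => ?_
  calc ∑ i ∈ Finset.range n, edist (f (u (i + 1))) (f (u i))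
      ≤ ∑ i ∈ Finset.range n, C * edist (g (u (i + 1))) (g (u i)) :=
        Finset.sum_le_sum fun i _ => h _ (us _) _ (us _)
    _ = C * ∑ i ∈ Finset.range n, edist (g (u (i + 1))) (g (u i)) := by rw [Finset.mul_sum]
    _ ≤ C * eVariationOn g s := by grw [eVariationOn.sum_le hu us]

lemma time_nonneg_of_mem_causalCone {p : Mink} (h : p ∈ causalCone) : 0 ≤ p.ofLp.1 :=
  (norm_nonneg _).trans h

lemma norm_le_sqrt_two_mul_time_of_mem_causalCone {p : Mink} (h : p ∈ causalCone) :
    ‖p‖ ≤ √2 * p.ofLp.1 := by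
  have ht := time_nonneg_of_mem_causalCone h
  have hsq : ‖p‖ ^ 2 ≤ (√2 * p.ofLp.1) ^ 2 := by
    rw [show ‖p‖ ^ 2 = ‖p.ofLp.1‖ ^ 2 + ‖p.ofLp.2‖ ^ 2 from WithLp.prod_norm_sq_eq_of_L2 p, mul_pow, Real.sq_sqrt zero_le_two, Real.norm_eq_abs, sq_abs]
    nlinarith [mul_self_le_mul_self (norm_nonneg _) h]
  exact (pow_le_pow_iff_left₀ (norm_nonneg p) (by positivity) two_ne_zero).1 hsq

lemma isOpen_chronCone : IsOpen chronCone :=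
  isOpen_lt (by fun_prop) (by fun_prop)

lemma isOpen_Iminus (x : Mink) : IsOpen (Iminus x) :=
  isOpen_chronCone.preimage (continuous_const.sub continuous_id)

lemma time_lt_of_chronLT {z x : Mink} (h : chronLT z x) : z.ofLp.1 < x.ofLp.1 := by
  have : 0 < (x - z).ofLp.1 := (norm_nonneg _).trans_lt h
  simpa using this

lemma chronLT_trans {w z y : Mink} (hwz : chronLT w z) (hzy : chronLT z y) : chronLT w y := by
  have hsum : y - w = (y - z) + (z - w) := by abel
  show ‖(y - w).ofLp.2‖ < (y - w).ofLp.1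
  rw [hsum]
  calc ‖((y - z) + (z - w)).ofLp.2‖ ≤ ‖(y - z).ofLp.2‖ + ‖(z - w).ofLp.2‖ := norm_add_le _ _
    _ < (y - z).ofLp.1 + (z - w).ofLp.1 := add_lt_add hzy hwz
    _ = ((y - z) + (z - w)).ofLp.1 := rfl

lemma isPastSet_Iminus (x : Mink) : IsPastSet (Iminus x) :=
  fun _ hz _ hw => chronLT_trans hw hz

lemma IsPastSet.biUnion {ι : Type*} {S : Set ι} {U : ι → Set Mink}
    (hU : ∀ i ∈ S, IsPastSet (U i)) : IsPastSet (⋃ i ∈ S, U i) := by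
  intro z hz w hw
  obtain ⟨i, hi, hzi⟩ := mem_iUnion₂.1 hz
  exact mem_biUnion hi (hU i hi z hzi w hw)

def timeUnit : Mink := WithLp.toLp 2 (1, 0)

lemma chronLT_sub_timeUnit (x : Mink) : chronLT (x - timeUnit) x := by
  show ‖(x - (x - timeUnit)).ofLp.2‖ < (x - (x - timeUnit)).ofLp.1
  simp [timeUnit]

lemma biUnion_Iminus_ne_Iminus {ι : Type*} {S : Set ι} {f : ι → Mink}
    (hf : ¬BddAbove ((fun i => (f i).ofLp.1) '' S)) (x : Mink) :
    ⋃ i ∈ S, Iminus (f i) ≠ Iminus x := by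
  intro heq
  refine hf ⟨x.ofLp.1 + 1, ?_⟩
  rintro _ ⟨i, hi, rfl⟩
  have hmem : f i - timeUnit ∈ Iminus x := heq ▸ mem_biUnion hi (chronLT_sub_timeUnit (f i))
  have := time_lt_of_chronLT hmem
  simp only [WithLp.ofLp_sub, Prod.fst_sub, timeUnit] at this
  linarith

namespace IsFDCausalOn

variable {c : ℝ → Mink} {I : Set ℝ}

lemma monotoneOn_time (hc : IsFDCausalOn c I) : MonotoneOn (fun s => (c s).ofLp.1) I := by
  intro s hs t ht hst
  rcases hst.eq_or_lt with rfl | hlt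
  · rfl
  · have := time_nonneg_of_mem_causalCone (hc.2 s hs t ht hlt).1
    simpa using this

lemma edist_le_sqrt_two_mul_edist_time (hc : IsFDCausalOn c I) {s t : ℝ} (hs : s ∈ I)
    (ht : t ∈ I) :
    edist (c s) (c t) ≤ ENNReal.ofReal √2 * edist (c s).ofLp.1 (c t).ofLp.1 := by
  wlog hst : s ≤ t generalizing s t
  · rw [edist_comm, edist_comm (c s).ofLp.1]
    exact this ht hs (le_of_not_ge hst)
  rcases hst.eq_or_lt with rfl | hlt
  · simp
  have hτ : (c s).ofLp.1 ≤ (c t).ofLp.1 := hc.monotoneOn_time hs ht hst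
  rw [edist_comm, edist_comm (c s).ofLp.1, edist_dist, edist_dist, dist_eq_norm, Real.dist_eq,
    abs_of_nonneg (sub_nonneg.2 hτ),
    ← ENNReal.ofReal_mul (Real.sqrt_nonneg 2)]
  refine ENNReal.ofReal_le_ofReal ?_
  simpa using norm_le_sqrt_two_mul_time_of_mem_causalCone (hc.2 s hs t ht hlt).1

variable {γ : ℝ → Mink}

lemma le_sqrt_two_mul_time_sub (hγ : IsFDCausalOn γ (Ici 0))
    (harc : ∀ s : ℝ, 0 ≤ s → eVariationOn γ (Icc 0 s) = ENNReal.ofReal s) {s : ℝ} (hs : 0 ≤ s) :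
    s ≤ √2 * ((γ s).ofLp.1 - (γ 0).ofLp.1) := by
  have hτ := hγ.monotoneOn_time.mono (Icc_subset_Ici_self : Icc 0 s ⊆ Ici 0)
  have hvar : eVariationOn γ (Icc 0 s)
      ≤ ENNReal.ofReal √2 * eVariationOn (fun s => (γ s).ofLp.1) (Icc 0 s) :=
    eVariationOn_le_mul_of_edist_le fun x hx y hy =>
      hγ.edist_le_sqrt_two_mul_edist_time hx.1 hy.1
  rw [harc s hs, ← inter_self (Icc 0 s), hτ.eVariationOn_eq (left_mem_Icc.2 hs)
    (right_mem_Icc.2 hs), ← ENNReal.ofReal_mul (Real.sqrt_nonneg 2)] at hvar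
  have hinc : 0 ≤ (γ s).ofLp.1 - (γ 0).ofLp.1 :=
    sub_nonneg.2 (hτ (left_mem_Icc.2 hs) (right_mem_Icc.2 hs) hs)
  exact (ENNReal.ofReal_le_ofReal_iff (by positivity)).1 hvar

lemma not_bddAbove_time (hγ : IsFDCausalOn γ (Ici 0))
    (harc : ∀ s : ℝ, 0 ≤ s → eVariationOn γ (Icc 0 s) = ENNReal.ofReal s) :
    ¬BddAbove ((fun s => (γ s).ofLp.1) '' Ici 0) := by
  rw [not_bddAbove_iff]
  intro M
  set s := √2 * (|M - (γ 0).ofLp.1| + 1)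
  have hs : 0 ≤ s := by positivity
  have hgrow : √2 * (|M - (γ 0).ofLp.1| + 1) ≤ √2 * ((γ s).ofLp.1 - (γ 0).ofLp.1) :=
    hγ.le_sqrt_two_mul_time_sub harc hs
  have := le_of_mul_le_mul_left hgrow (by positivity)
  exact ⟨_, mem_image_of_mem _ hs, by linarith [le_abs_self (M - (γ 0).ofLp.1)]⟩

end IsFDCausalOn

/-- Every future-endless causal curve in Minkowski space-time defines an ideal point,
i.e. a terminal indecomposable past set: `I⁻(γ)` is a nonempty open past set not of the
form `I⁻(x)` for any point `x`. -/
theorem minkowski_endless_curve_gives_TIP (γ : ℝ → Mink)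
    (hγ : IsFDCausalOn γ (Set.Ici 0))
    (harc : ∀ s : ℝ, 0 ≤ s → eVariationOn γ (Set.Icc 0 s) = ENNReal.ofReal s) :
    (⋃ s ∈ Set.Ici (0 : ℝ), Iminus (γ s)).Nonempty ∧
    IsOpen (⋃ s ∈ Set.Ici (0 : ℝ), Iminus (γ s)) ∧
    IsPastSet (⋃ s ∈ Set.Ici (0 : ℝ), Iminus (γ s)) ∧
    ∀ x : Mink, (⋃ s ∈ Set.Ici (0 : ℝ), Iminus (γ s)) ≠ Iminus x :=
  ⟨⟨γ 0 - timeUnit, mem_biUnion self_mem_Ici (chronLT_sub_timeUnit _)⟩,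
    isOpen_biUnion fun s _ => isOpen_Iminus (γ s),
    IsPastSet.biUnion fun s _ => isPastSet_Iminus (γ s),
    biUnion_Iminus_ne_Iminus (hγ.not_bddAbove_time harc)⟩
end
end
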